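/- Let 𝔫 be the 5-dimensional real Lie algebra with orthonormal basis {E₁,…,E₅} and non-zero brackets [E₁,E₂] = m·E₄, [E₁,E₄] = m·E₅, [E₂,E₃] = (√2/2)m·E₅ with m > 0. Then the diagonal endomorphism D defined by D(E₁) = (3/4)m²·E₁, D(E₂) = m²·E₂, D(E₃) = (3/2)m²·E₃, D(E₄) = (7/4)m²·E₄, D(E₅) = (5/2)m²·E₅ is a derivation of 𝔫, and Ric = −(7/4)m²·Id + D. -/

import Mathlib

/-!
Being diagonal in the basis `E`, `D` is multiplication by its vector of eigenvalues
`m² · (3/4, 1, 3/2, 7/4, 5/2)`, and it is a derivation because the eigenvalue of each bracket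
is the sum of those of its factors: `3/4 + 1 = 7/4`, `3/4 + 7/4 = 1 + 3/2 = 5/2`.
The Ricci operator is determined by the bilinear form defining it, so it suffices to check that
`-(7/4) m² · Id + D` satisfies that identity; both sums in it are diagonal quadratic forms,
computed directly (with `(√2/2)² = 1/2`).
-/

open scoped BigOperators

namespace Nilsoliton12

noncomputable section

abbrev V : Type := Fin 5 → ℝ

/-- The orthonormal basis vectors E₁,…,E₅ (indexed 0,…,4). -/
def E (i : Fin 5) : V := Pi.single i 1

/-- The inner product making `E` an orthonormal basis. -/
def ip (x y : V) : ℝ := ∑ i, x i * y i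

/-- `D` is a derivation of the bracket `br`. -/
def IsDerivation (br : V → V → V) (D : V →ₗ[ℝ] V) : Prop :=
  ∀ X Y : V, D (br X Y) = br (D X) Y + br X (D Y)

/-- `Ric` is the Ricci operator of the nilpotent Lie group with left-invariant
metric determined by the bracket `br` and the orthonormal basis `E`. -/
def IsRicci (br : V → V → V) (Ric : V →ₗ[ℝ] V) : Prop :=
  ∀ X Y : V, ip (Ric X) Y =
      -(1/2) * (∑ i : Fin 5, ip (br X (E i)) (br Y (E i)))
      + (1/4) * (∑ i : Fin 5, ∑ j : Fin 5, ip (br (E i) (E j)) X * ip (br (E i) (E j)) Y)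

/-- The bracket: [E₁,E₂] = m·E₄, [E₁,E₄] = m·E₅, [E₂,E₃] = (√2/2)m·E₅. -/
def br (m : ℝ) (X Y : V) : V :=
  (m * (X 0 * Y 1 - X 1 * Y 0)) • E 3 + (m * (X 0 * Y 3 - X 3 * Y 0) + (Real.sqrt 2 / 2) * m * (X 1 * Y 2 - X 2 * Y 1)) • E 4

theorem _root_.LinearMap.eq_mulLeft_of_apply_single {R ι : Type*} [CommSemiring R] [Finite ι]
    [DecidableEq ι] (f : (ι → R) →ₗ[R] ι → R) (d : ι → R)
    (h : ∀ i, f (Pi.single i 1) = d i • Pi.single i 1) :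
    f = LinearMap.mulLeft R d :=
  (Pi.basisFun R ι).ext fun i => by
    rw [Pi.basisFun_apply, h, LinearMap.mulLeft_apply, ← Pi.single_mul_right, ← Pi.single_smul',
      smul_eq_mul]

theorem ip_E (v : V) (j : Fin 5) : ip v (E j) = v j := by
  simp [ip, E, Pi.single_apply]

theorem IsRicci.unique {br : V → V → V} {R R' : V →ₗ[ℝ] V} (h : IsRicci br R)
    (h' : IsRicci br R') : R = R' :=
  LinearMap.ext fun X => funext fun j => by rw [← ip_E (R X), ← ip_E (R' X), h, h']

def derivationWeights (m : ℝ) : V :=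
  ![(3/4) * m ^ 2, m ^ 2, (3/2) * m ^ 2, (7/4) * m ^ 2, (5/2) * m ^ 2]

theorem isDerivation_mulLeft_derivationWeights (m : ℝ) :
    IsDerivation (br m) (LinearMap.mulLeft ℝ (derivationWeights m)) := by
  intro X Y
  funext j
  fin_cases j <;> simp [br, E, derivationWeights] <;> ring

theorem sum_ip_br_E (m : ℝ) (X Y : V) :
    ∑ i, ip (br m X (E i)) (br m Y (E i)) =
      m ^ 2 * (2 * X 0 * Y 0 + 3/2 * X 1 * Y 1 + 1/2 * X 2 * Y 2 + X 3 * Y 3) := by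
  simp only [ip, br, E, Fin.sum_univ_five, Pi.add_apply, Pi.smul_apply, smul_eq_mul,
    Pi.single_apply, Fin.reduceEq, ↓reduceIte]
  linear_combination
    (m ^ 2 * (X 1 * Y 1 + X 2 * Y 2) / 4) * Real.sq_sqrt (zero_le_two : (0 : ℝ) ≤ 2)

theorem sum_sum_ip_br_E_E (m : ℝ) (X Y : V) :
    ∑ i, ∑ j, ip (br m (E i) (E j)) X * ip (br m (E i) (E j)) Y =
      m ^ 2 * (2 * X 3 * Y 3 + 3 * X 4 * Y 4) := by
  simp only [ip, br, E, Fin.sum_univ_five, Pi.add_apply, Pi.smul_apply, smul_eq_mul,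
    Pi.single_apply, Fin.reduceEq, ↓reduceIte]
  linear_combination (m ^ 2 * X 4 * Y 4 / 2) * Real.sq_sqrt (zero_le_two : (0 : ℝ) ≤ 2)

theorem isRicci_br (m : ℝ) :
    IsRicci (br m)
      ((-(7/4) * m ^ 2) • LinearMap.id + LinearMap.mulLeft ℝ (derivationWeights m)) := by
  intro X Y
  rw [sum_ip_br_E, sum_sum_ip_br_E_E]
  simp only [ip, derivationWeights, Fin.sum_univ_five, LinearMap.add_apply, LinearMap.smul_apply,
    LinearMap.id_apply, LinearMap.mulLeft_apply, Pi.add_apply, Pi.smul_apply, Pi.mul_apply,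
    smul_eq_mul, Matrix.cons_val]
  ring

theorem stmt12_general (m : ℝ)
    (Ric : V →ₗ[ℝ] V) (hRic : IsRicci (br m) Ric)
    (D : V →ₗ[ℝ] V)
    (hD0 : D (E 0) = ((3/4) * m ^ 2) • E 0)
    (hD1 : D (E 1) = (m ^ 2) • E 1)
    (hD2 : D (E 2) = ((3/2) * m ^ 2) • E 2)
    (hD3 : D (E 3) = ((7/4) * m ^ 2) • E 3)
    (hD4 : D (E 4) = ((5/2) * m ^ 2) • E 4) :
    IsDerivation (br m) D ∧
    Ric = (-(7/4) * m ^ 2) • (LinearMap.id : V →ₗ[ℝ] V) + D := by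
  obtain rfl : D = LinearMap.mulLeft ℝ (derivationWeights m) :=
    D.eq_mulLeft_of_apply_single _ fun i => by fin_cases i <;> assumption
  exact ⟨isDerivation_mulLeft_derivationWeights m, hRic.unique (isRicci_br m)⟩

theorem stmt12 (m : ℝ) (hm : 0 < m)
    (Ric : V →ₗ[ℝ] V) (hRic : IsRicci (br m) Ric)
    (D : V →ₗ[ℝ] V)
    (hD0 : D (E 0) = ((3/4) * m ^ 2) • E 0)
    (hD1 : D (E 1) = (m ^ 2) • E 1)
    (hD2 : D (E 2) = ((3/2) * m ^ 2) • E 2)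
    (hD3 : D (E 3) = ((7/4) * m ^ 2) • E 3)
    (hD4 : D (E 4) = ((5/2) * m ^ 2) • E 4) :
    IsDerivation (br m) D ∧
    Ric = (-(7/4) * m ^ 2) • (LinearMap.id : V →ₗ[ℝ] V) + D :=
  stmt12_general m Ric hRic D hD0 hD1 hD2 hD3 hD4

end

end Nilsoliton12
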